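/- arXiv:2301.01800 — 4 statements merged into one kernel-verified Lean document; each statement's English description precedes it below -/
import Mathlib

section
/- Let ℓ be a prime number, G a pro-(prime-to-ℓ) profinite group, and d, n ≥ 1 integers. Then every group homomorphism ρ : G → GL_d(ℤ/ℓ^nℤ) (no continuity assumption) such that ρ(g) is unipotent for every g ∈ G is trivial, i.e. ρ(g) = 1 for all g ∈ G. -/
/-!
Every unipotent matrix over `ℤ/ℓⁿℤ` has `ℓ`-power order (expand `(1 + X)^(ℓ^N)` binomially), so
all of `ρ(G)` is killed by the single `ℓ`-power `q = ℓ^|GL_d(ℤ/ℓⁿℤ)|`. On the other hand, in a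
pro-(prime-to-`ℓ`) group every element is a `q`-th power: the `q`-th powers form a compact, hence
closed, set which meets every coset of every open normal subgroup, because `q` is invertible
modulo the index. Hence `ρ g = ρ h ^ q = 1`.
-/

open Finset in
theorem add_one_pow_prime_pow_eq_one {R : Type*} [Ring R] {ℓ n D : ℕ} (hℓ : ℓ.Prime)
    (hR : ((ℓ ^ n : ℕ) : R) = 0) {X : R} (hX : X ^ D = 0) :
    (X + 1) ^ ℓ ^ (n + D) = 1 := by
  rw [(Commute.one_right X).add_pow, sum_eq_single_of_mem 0 (by simp)]
  · simp
  intro b _ hb0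
  obtain hbD | hDb := lt_or_ge b D
  · have hdvd : ℓ ^ n ∣ (ℓ ^ (n + D)).choose b := by
      have hb : b ≤ ℓ ^ (n + D) := (hbD.trans_le (by omega)).le.trans
        (Nat.lt_pow_self hℓ.one_lt).le
      rw [hℓ.pow_dvd_iff_le_factorization (Nat.choose_pos hb).ne',
        Nat.factorization_choose_prime_pow hℓ hb hb0]
      have := Nat.factorization_lt ℓ hb0
      omega
    obtain ⟨c, hc⟩ := hdvd
    rw [hc, Nat.cast_mul, hR, zero_mul, mul_zero]
  · rw [pow_eq_zero_of_le hDb hX, zero_mul, zero_mul]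

theorem Units.exists_pow_prime_pow_eq_one_of_isNilpotent_sub_one {R : Type*} [Ring R]
    {ℓ n : ℕ} (hℓ : ℓ.Prime) (hR : ((ℓ ^ n : ℕ) : R) = 0) {u : Rˣ}
    (hu : IsNilpotent ((u : R) - 1)) : ∃ k, u ^ ℓ ^ k = 1 := by
  obtain ⟨D, hD⟩ := hu
  refine ⟨n + D, Units.ext ?_⟩
  simpa using add_one_pow_prime_pow_eq_one hℓ hR hD

theorem pow_prime_pow_natCard_eq_one {H : Type*} [Group H] [Finite H] {ℓ : ℕ} (hℓ : ℓ.Prime)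
    {x : H} (hx : ∃ k, x ^ ℓ ^ k = 1) : x ^ ℓ ^ Nat.card H = 1 := by
  obtain ⟨k, hk⟩ := hx
  obtain ⟨i, -, hi⟩ := (Nat.dvd_prime_pow hℓ).mp (orderOf_dvd_of_pow_eq_one hk)
  have hle : ℓ ^ i ≤ Nat.card H := hi ▸ Nat.le_of_dvd Nat.card_pos (orderOf_dvd_natCard x)
  rw [← orderOf_dvd_iff_pow_eq_one, hi]
  exact Nat.pow_dvd_pow ℓ ((Nat.lt_pow_self hℓ.one_lt).trans_le hle).le

theorem Subgroup.exists_inv_mul_pow_mem_of_coprime_index {G : Type*} [Group G]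
    {U : Subgroup G} [U.Normal] {m : ℕ} (hU : U.index.Coprime m) (g : G) :
    ∃ h : G, g⁻¹ * h ^ m ∈ U := by
  obtain ⟨x, hx⟩ := (Nat.Coprime.pow_left_bijective (G := G ⧸ U) hU).surjective g
  obtain ⟨h, rfl⟩ := QuotientGroup.mk_surjective x
  exact ⟨h, QuotientGroup.eq.mp hx.symm⟩

theorem ProfiniteGrp.exists_pow_eq_of_coprime_index {G : Type*} [Group G] [TopologicalSpace G]
    [IsTopologicalGroup G] [CompactSpace G] [T2Space G] [TotallyDisconnectedSpace G] {m : ℕ}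
    (hm : ∀ U : OpenNormalSubgroup G, (U : Subgroup G).index.Coprime m) (g : G) :
    ∃ h : G, h ^ m = g := by
  have hclosed : IsClosed (Set.range fun h : G => h ^ m) :=
    (isCompact_range (continuous_pow m)).isClosed
  suffices g ∈ closure (Set.range fun h : G => h ^ m) by
    rwa [hclosed.closure_eq] at this
  rw [mem_closure_iff]
  intro W hW hgW
  obtain ⟨U, hUW⟩ := ProfiniteGrp.exist_openNormalSubgroup_sub_open_nhds_of_one
    (hW.preimage (continuous_const_mul g)) (by simpa using hgW)
  obtain ⟨h, hh⟩ := Subgroup.exists_inv_mul_pow_mem_of_coprime_index (hm U) g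
  exact ⟨h ^ m, by simpa using hUW hh, h, rfl⟩

theorem stmt_3_general
    (ℓ : ℕ) (hℓ : ℓ.Prime)
    (G : Type*) [Group G] [TopologicalSpace G] [IsTopologicalGroup G]
    [CompactSpace G] [T2Space G] [TotallyDisconnectedSpace G]
    (hG : ∀ U : Subgroup G, U.Normal → IsOpen (U : Set G) → Nat.Coprime U.index ℓ)
    (d n : ℕ)
    (ρ : G →* Matrix.GeneralLinearGroup (Fin d) (ZMod (ℓ ^ n)))
    (hρ : ∀ g : G,
      IsNilpotent ((ρ g : Matrix (Fin d) (Fin d) (ZMod (ℓ ^ n))) - 1)) :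
    ∀ g : G, ρ g = 1 := by
  have : NeZero (ℓ ^ n) := ⟨pow_ne_zero n hℓ.ne_zero⟩
  set q := ℓ ^ Nat.card (Matrix.GeneralLinearGroup (Fin d) (ZMod (ℓ ^ n)))
  have hchar : ((ℓ ^ n : ℕ) : Matrix (Fin d) (Fin d) (ZMod (ℓ ^ n))) = 0 := by
    rw [← map_natCast (algebraMap (ZMod (ℓ ^ n)) _), ZMod.natCast_self, map_zero]
  have hρq : ∀ h : G, ρ h ^ q = 1 := fun h => pow_prime_pow_natCard_eq_one hℓ
    (Units.exists_pow_prime_pow_eq_one_of_isNilpotent_sub_one hℓ hchar (hρ h))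
  intro g
  obtain ⟨h, rfl⟩ := ProfiniteGrp.exists_pow_eq_of_coprime_index (m := q)
    (fun U => (hG U.toSubgroup U.isNormal' U.isOpen').pow_right _) g
  rw [map_pow]
  exact hρq h

/-- Let `ℓ` be a prime, `G` a pro-(prime-to-`ℓ`) profinite group,
and `d, n ≥ 1`. Then every (not necessarily continuous) group homomorphism
`ρ : G → GL_d(ℤ/ℓ^nℤ)` such that every `ρ g` is unipotent is trivial. -/
theorem stmt_3
    (ℓ : ℕ) (hℓ : ℓ.Prime)
    (G : Type*) [Group G] [TopologicalSpace G] [IsTopologicalGroup G]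
    [CompactSpace G] [T2Space G] [TotallyDisconnectedSpace G]
    (hG : ∀ U : Subgroup G, U.Normal → IsOpen (U : Set G) → Nat.Coprime U.index ℓ)
    (d n : ℕ) (hd : 1 ≤ d) (hn : 1 ≤ n)
    (ρ : G →* Matrix.GeneralLinearGroup (Fin d) (ZMod (ℓ ^ n)))
    (hρ : ∀ g : G,
      IsNilpotent ((ρ g : Matrix (Fin d) (Fin d) (ZMod (ℓ ^ n))) - 1)) :
    ∀ g : G, ρ g = 1 :=
  stmt_3_general ℓ hℓ G hG d n ρ hρ
end

section
/- Let ℓ be a prime number and let G be a profinite group equipped with a continuous surjective group homomorphism t : G → ℤ_ℓ (onto the additive group of ℓ-adic integers) whose kernel is a pro-(prime-to-ℓ) profinite group. Let V be a finite-dimensional ℚ_ℓ-vector space and ρ : G → GL(V) a continuous group homomorphism such that ρ(g) is unipotent for every g ∈ G. Then there exists a unique nilpotent endomorphism N of V such that ρ(g) = exp(t(g) · N) for all g ∈ G. -/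
/-!
A unipotent `u` satisfies `u ^ ℓ ^ m → 1`, because `(ℓ ^ m).choose k → 0` ℓ-adically for `k ≥ 1`,
while in a pro-(prime-to-`ℓ`) group every `g` is a cluster point of `g ^ ℓ ^ m` (in each finite
quotient, `ℓ` is invertible modulo the order of `g`). So `ρ` is trivial on the kernel of `t`.
Taking `t g₁ = 1` and `q = ρ g₁ - 1`, the maps `g ↦ ρ g` and `g ↦ ∑ₖ (t g choose k) qᵏ` agree where
`t g ∈ ℕ`, a dense set, hence everywhere. The polynomial map `F x = ∑ₖ (x choose k) qᵏ` satisfies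
`F (m + n) = F m * F n` on `ℕ`; comparing coefficients of `y` in `F (x + y) = F x * F y` gives
`F' = F * F' 0`, whose polynomial solutions are `x ↦ exp (x N)` with `N = F' 0`. Uniqueness:
`N` is the coefficient of `x` in `exp (x N)`.
-/

/-- `exp (x • N) = Σ_k x^k N^k / k!` for an endomorphism `N` of a `ℚ_ℓ`-vector space
and a scalar `x`. For nilpotent `N` this is a finite sum. -/
noncomputable def expSMul (ℓ : ℕ) [Fact ℓ.Prime] {V : Type*} [NormedAddCommGroup V]
    [NormedSpace ℚ_[ℓ] V] (x : ℚ_[ℓ]) (N : V →L[ℚ_[ℓ]] V) : V →L[ℚ_[ℓ]] V :=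
  ∑' k : ℕ, ((x ^ k / (k.factorial : ℚ_[ℓ])) • N ^ k)

open Finset Filter Topology

section PolynomialMaps

variable {K : Type*} [Field K]

theorem eq_zero_of_forall_sum_pow_smul_eq_zero {M : Type*} [AddCommGroup M] [Module K M]
    {S : Set K} (hS : S.Infinite) {r : ℕ} {b : ℕ → M}
    (h : ∀ x ∈ S, ∑ j ∈ range r, x ^ j • b j = 0) {j : ℕ} (hj : j < r) : b j = 0 := by
  rw [← Module.forall_dual_apply_eq_zero_iff K]
  intro f
  set p : Polynomial K := ∑ i ∈ range r, Polynomial.C (f (b i)) * Polynomial.X ^ i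
  have hp : p = 0 := by
    refine Polynomial.eq_zero_of_infinite_isRoot p (hS.mono fun x hx => ?_)
    have hfx := congrArg f (h x hx)
    simp only [map_sum, map_smul, smul_eq_mul, map_zero] at hfx
    simp only [Polynomial.IsRoot, p, Polynomial.eval_finsetSum, Polynomial.eval_mul,
      Polynomial.eval_C, Polynomial.eval_pow, Polynomial.eval_X]
    rw [← hfx]
    exact sum_congr rfl fun i _ => mul_comm _ _
  simpa [p, Polynomial.finsetSum_coeff, Polynomial.coeff_C_mul, Polynomial.coeff_X_pow, hj]
    using congrArg (Polynomial.coeff · j) hp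

theorem sum_add_pow_smul {R M : Type*} [CommSemiring R] [AddCommMonoid M] [Module R M]
    (x y : R) (n : ℕ) (a : ℕ → M) :
    ∑ j ∈ range n, (x + y) ^ j • a j
      = ∑ i ∈ range n, y ^ i • ∑ j ∈ range n, ((j.choose i : R) * x ^ (j - i)) • a j := by
  simp_rw [smul_sum, smul_smul]
  rw [sum_comm]
  refine sum_congr rfl fun j hj => ?_
  rw [add_comm, add_pow, sum_smul]
  refine sum_subset (range_subset_range.2 (by simpa using hj)) (fun i _ hi => ?_) |>.trans
    (sum_congr rfl fun i _ => by ring_nf)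
  rw [Nat.choose_eq_zero_of_lt (by simpa using hi), Nat.cast_zero, mul_zero, zero_smul]

theorem exists_pow_eq_zero_and_eq_sum_exp_of_map_add [CharZero K] {A : Type*} [Ring A]
    [Algebra K A] {S : Set K} (hS : S.Infinite) {F : K → A} {r : ℕ} {a : ℕ → A}
    (hF : ∀ x, F x = ∑ j ∈ range r, x ^ j • a j) (ha : ∀ j, r ≤ j → a j = 0) (hF0 : F 0 = 1)
    (hadd : ∀ x ∈ S, ∀ y ∈ S, F (x + y) = F x * F y) :
    ∃ N : A, N ^ r = 0 ∧ ∀ x, F x = ∑ k ∈ range r, (x ^ k / k.factorial) • N ^ k := by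
  have hpad : ∀ n, r ≤ n → ∀ x, F x = ∑ j ∈ range n, x ^ j • a j := fun n hn x => by
    rw [hF, sum_subset (range_subset_range.2 hn) fun j _ hj => by
      rw [ha j (by simpa using hj), smul_zero]]
  have ha0 : a 0 = 1 := by simpa [hpad (r + 1) (by omega), sum_range_succ'] using hF0
  -- the coefficient of `y` in `F (x + y) = F x * F y`, that is `F' x = F x * a 1`
  have hderiv : ∀ x ∈ S, ∑ i ∈ range (r + 1), x ^ i • ((i + 1 : K) • a (i + 1))
      = ∑ i ∈ range (r + 1), x ^ i • (a i * a 1) := by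
    intro x hx
    have hcoeff : ∀ y ∈ S, ∑ i ∈ range (r + 2), y ^ i •
        (∑ j ∈ range (r + 2), ((j.choose i : K) * x ^ (j - i)) • a j - F x * a i) = 0 := by
      intro y hy
      have hprod : F x * F y = ∑ i ∈ range (r + 2), y ^ i • (F x * a i) := by
        rw [hpad (r + 2) (by omega) y, mul_sum]
        exact sum_congr rfl fun i _ => mul_smul_comm _ _ _
      simp only [smul_sub, sum_sub_distrib]
      rw [← sum_add_pow_smul, ← hpad (r + 2) (by omega), ← hprod, hadd x hx y hy, sub_self]
    have h1 := sub_eq_zero.1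
      (eq_zero_of_forall_sum_pow_smul_eq_zero hS hcoeff (j := 1) (by omega))
    rw [sum_range_succ', Nat.choose_zero_succ, Nat.cast_zero, zero_mul, zero_smul, add_zero,
      hpad (r + 1) (by omega), sum_mul] at h1
    simp only [smul_mul_assoc] at h1
    rw [← h1]
    refine sum_congr rfl fun i _ => ?_
    rw [Nat.choose_one_right, Nat.add_sub_cancel, smul_smul, mul_comm]
    push_cast
    rfl
  have hrec : ∀ i : ℕ, (i + 1 : K) • a (i + 1) = a i * a 1 := by
    intro i
    rcases lt_or_ge i (r + 1) with hi | hi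
    · refine sub_eq_zero.1 (eq_zero_of_forall_sum_pow_smul_eq_zero hS
        (b := fun i => (i + 1 : K) • a (i + 1) - a i * a 1) (fun x hx => ?_) hi)
      simp only [smul_sub, sum_sub_distrib, hderiv x hx, sub_self]
    · rw [ha i (by omega), ha (i + 1) (by omega), smul_zero, zero_mul]
  have hexp : ∀ j, a j = (j.factorial : K)⁻¹ • a 1 ^ j := by
    intro j
    induction j with
    | zero => simp [ha0]
    | succ j ih =>
      rw [← inv_smul_smul₀ (Nat.cast_add_one_ne_zero j : (j + 1 : K) ≠ 0) (a (j + 1)), hrec, ih,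
        smul_mul_assoc, ← pow_succ, smul_smul, Nat.factorial_succ, Nat.cast_mul, mul_inv]
      push_cast
      rfl
  refine ⟨a 1, ?_, fun x => ?_⟩
  · have h := hexp r
    rw [ha r le_rfl, eq_comm, smul_eq_zero] at h
    exact h.resolve_left (inv_ne_zero (Nat.cast_ne_zero.2 r.factorial_ne_zero))
  · rw [hF]
    exact sum_congr rfl fun k _ => by rw [hexp, smul_smul, div_eq_mul_inv]

theorem eq_of_forall_sum_exp_eq [CharZero K] {A : Type*} [Ring A] [Algebra K A] {S : Set K}
    (hS : S.Infinite) {r : ℕ} {N N' : A} (hN : N ^ r = 0) (hN' : N' ^ r = 0)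
    (h : ∀ x ∈ S, ∑ k ∈ range r, (x ^ k / k.factorial) • N ^ k
      = ∑ k ∈ range r, (x ^ k / k.factorial) • N' ^ k) : N = N' := by
  rcases lt_or_ge 1 r with hr | hr
  · have h1 := eq_zero_of_forall_sum_pow_smul_eq_zero hS
      (b := fun k => (k.factorial : K)⁻¹ • (N ^ k - N' ^ k)) (fun x hx => ?_) hr
    · simpa [sub_eq_zero] using h1
    · simp only [smul_smul, smul_sub, sum_sub_distrib, ← div_eq_mul_inv, h x hx, sub_self]
  · rw [← pow_one N, ← pow_one N', pow_eq_zero_of_le hr hN, pow_eq_zero_of_le hr hN']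

end PolynomialMaps

theorem one_add_pow_eq_sum_range_choose_nsmul {R : Type*} [Semiring R] {q : R} {r : ℕ}
    (hq : q ^ r = 0) (n : ℕ) : (1 + q) ^ n = ∑ k ∈ range r, n.choose k • q ^ k := by
  rw [add_comm, (Commute.one_right q).add_pow]
  calc ∑ k ∈ range (n + 1), q ^ k * 1 ^ (n - k) * (n.choose k : R)
      = ∑ k ∈ range (n + 1 + r), n.choose k • q ^ k := by
        refine sum_subset (range_subset_range.2 (by omega)) (fun k _ hk => ?_) |>.trans
          (sum_congr rfl fun k _ => ?_)
        · rw [Nat.choose_eq_zero_of_lt (by simpa using hk), Nat.cast_zero, mul_zero]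
        · rw [one_pow, mul_one, nsmul_eq_mul, Nat.cast_comm]
    _ = ∑ k ∈ range r, n.choose k • q ^ k :=
        (sum_subset (range_subset_range.2 (by omega)) fun k _ hk => by
          rw [pow_eq_zero_of_le (by simpa using hk) hq, smul_zero]).symm

section BinomialSum

variable {K A : Type*} [Field K] [Ring A] [Algebra K A]

/-- The binomial series `(1 + q) ^ x = ∑ₖ (x choose k) qᵏ`, truncated at `r`; it is exact
when `q ^ r = 0`. -/
noncomputable def binomialSum (r : ℕ) (q : A) (x : K) : A :=
  ∑ k ∈ range r, ((descPochhammer K k).eval x / k.factorial) • q ^ k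

theorem binomialSum_natCast [CharZero K] {r : ℕ} {q : A} (hq : q ^ r = 0) (n : ℕ) :
    binomialSum r q (n : K) = (1 + q) ^ n := by
  rw [one_add_pow_eq_sum_range_choose_nsmul hq, binomialSum]
  refine sum_congr rfl fun k _ => ?_
  rw [descPochhammer_eval_eq_descFactorial, Nat.descFactorial_eq_factorial_mul_choose,
    Nat.cast_mul, mul_div_cancel_left₀ _ (Nat.cast_ne_zero.2 k.factorial_ne_zero),
    Nat.cast_smul_eq_nsmul]

theorem exists_binomialSum_eq_sum_pow_smul (r : ℕ) (q : A) :
    ∃ a : ℕ → A, (∀ j, r ≤ j → a j = 0) ∧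
      ∀ x : K, binomialSum r q x = ∑ j ∈ range r, x ^ j • a j := by
  refine ⟨fun j => ∑ k ∈ range r, ((descPochhammer K k).coeff j / k.factorial) • q ^ k,
    fun j hj => sum_eq_zero fun k hk => ?_, fun x => ?_⟩
  · rw [Polynomial.coeff_eq_zero_of_natDegree_lt
      (by rw [descPochhammer_natDegree]; simp only [mem_range] at hk; omega), zero_div, zero_smul]
  · simp only [binomialSum, smul_sum]
    rw [sum_comm]
    refine sum_congr rfl fun k hk => ?_
    rw [Polynomial.eval_eq_sum_range' (n := r) (by rw [descPochhammer_natDegree]; simpa using hk),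
      sum_div, sum_smul]
    refine sum_congr rfl fun j _ => ?_
    rw [smul_smul]
    ring_nf

theorem exists_pow_eq_zero_and_binomialSum_eq [CharZero K] {r : ℕ} {q : A} (hq : q ^ r = 0) :
    ∃ N : A, N ^ r = 0 ∧
      ∀ x : K, binomialSum r q x = ∑ k ∈ range r, (x ^ k / k.factorial) • N ^ k := by
  obtain ⟨a, ha, hF⟩ := exists_binomialSum_eq_sum_pow_smul (K := K) r q
  refine exists_pow_eq_zero_and_eq_sum_exp_of_map_add
    (Set.infinite_range_of_injective Nat.cast_injective) hF ha ?_ ?_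
  · simpa using binomialSum_natCast (K := K) hq 0
  · rintro _ ⟨m, rfl⟩ _ ⟨n, rfl⟩
    rw [← Nat.cast_add, binomialSum_natCast hq, binomialSum_natCast hq, binomialSum_natCast hq,
      pow_add]

theorem continuous_binomialSum [TopologicalSpace K] [IsTopologicalRing K] [TopologicalSpace A]
    [ContinuousAdd A] [ContinuousSMul K A] (r : ℕ) (q : A) :
    Continuous (binomialSum (K := K) r q) :=
  continuous_finsetSum _ fun _ _ => ((Polynomial.continuous _).div_const _).smul continuous_const

end BinomialSum

theorem pow_pow_totient_orderOf_mul_eq_self {G : Type*} [Group G] {x : G} {ℓ : ℕ}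
    (h : ℓ.Coprime (orderOf x)) (j : ℕ) : x ^ ℓ ^ ((orderOf x).totient * j) = x := by
  conv_rhs => rw [← pow_one x]
  rw [pow_eq_pow_iff_modEq, pow_mul]
  simpa using (Nat.ModEq.pow_totient h).pow j

theorem mapClusterPt_pow_pow_of_coprime_index {G : Type*} [Group G] [TopologicalSpace G]
    [IsTopologicalGroup G] [CompactSpace G] [TotallyDisconnectedSpace G] {ℓ : ℕ}
    (hG : ∀ U : Subgroup G, U.Normal → IsOpen (U : Set G) → Nat.Coprime U.index ℓ) (g : G) :
    MapClusterPt g atTop (fun m : ℕ => g ^ ℓ ^ m) := by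
  rw [mapClusterPt_iff_frequently]
  intro W hW
  obtain ⟨H, hH⟩ := ProfiniteGrp.exist_openNormalSubgroup_sub_open_nhds_of_one
    (isOpen_interior.preimage (continuous_const_mul g))
    (by simpa using mem_interior_iff_mem_nhds.2 hW)
  have : Finite (G ⧸ H.toSubgroup) := Subgroup.quotient_finite_of_isOpen _ H.isOpen'
  set d := orderOf (g : G ⧸ H.toSubgroup)
  have hd : ℓ.Coprime d :=
    (Nat.Coprime.coprime_dvd_left (orderOf_dvd_natCard _) (hG _ H.isNormal' H.isOpen')).symm
  refine frequently_atTop.2 fun M => ⟨d.totient * M,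
    Nat.le_mul_of_pos_left _ (Nat.totient_pos.2 (orderOf_pos _)), interior_subset ?_⟩
  have hq : ((g ^ ℓ ^ (d.totient * M) : G) : G ⧸ H.toSubgroup) = g := by
    rw [QuotientGroup.mk_pow, pow_pow_totient_orderOf_mul_eq_self hd]
  simpa using hH (QuotientGroup.eq.1 hq.symm)

section Padic

variable {ℓ : ℕ} [hℓ : Fact ℓ.Prime]

theorem tendsto_natCast_choose_prime_pow {k : ℕ} (hk : k ≠ 0) :
    Tendsto (fun m : ℕ => ((ℓ ^ m).choose k : ℚ_[ℓ])) atTop (𝓝 0) := by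
  obtain ⟨k, rfl⟩ := Nat.exists_eq_succ_of_ne_zero hk
  have hk0 : ((k + 1 : ℕ) : ℚ_[ℓ]) ≠ 0 := Nat.cast_ne_zero.2 k.succ_ne_zero
  have hchoose : ∀ m, ((ℓ ^ m).choose (k + 1) : ℚ_[ℓ])
      = (ℓ : ℚ_[ℓ]) ^ m * ((ℓ ^ m - 1).choose k : ℕ) / (k + 1 : ℕ) := fun m => by
    rw [eq_div_iff hk0]
    have h := Nat.add_one_mul_choose_eq (ℓ ^ m - 1) k
    rw [Nat.sub_add_cancel (Nat.one_le_pow _ _ hℓ.out.pos)] at h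
    exact_mod_cast h.symm
  have hbound : ∀ m, ‖((ℓ ^ m).choose (k + 1) : ℚ_[ℓ])‖
      ≤ ‖(ℓ : ℚ_[ℓ])‖ ^ m / ‖((k + 1 : ℕ) : ℚ_[ℓ])‖ := fun m => by
    rw [hchoose, norm_div, norm_mul, norm_pow]
    gcongr
    exact mul_le_of_le_one_right (by positivity)
      (by exact_mod_cast Padic.norm_int_le_one ((ℓ ^ m - 1).choose k))
  refine squeeze_zero_norm hbound ?_
  simpa only [zero_div] using (tendsto_pow_atTop_nhds_zero_of_lt_one (norm_nonneg (ℓ : ℚ_[ℓ]))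
    Padic.norm_p_lt_one).div_const ‖((k + 1 : ℕ) : ℚ_[ℓ])‖

variable {A : Type*} [Ring A] [TopologicalSpace A] [IsTopologicalRing A] [Algebra ℚ_[ℓ] A]
  [ContinuousSMul ℚ_[ℓ] A]

theorem tendsto_pow_prime_pow_of_isNilpotent_sub_one {u : A} (hu : IsNilpotent (u - 1)) :
    Tendsto (fun m : ℕ => u ^ ℓ ^ m) atTop (𝓝 1) := by
  obtain ⟨r, hr⟩ := hu
  have hexpand : ∀ m : ℕ, u ^ ℓ ^ m
      = ∑ k ∈ range r, ((ℓ ^ m).choose (k + 1) : ℚ_[ℓ]) • (u - 1) ^ (k + 1) + 1 := fun m => by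
    conv_lhs => rw [← add_sub_cancel 1 u]
    rw [one_add_pow_eq_sum_range_choose_nsmul (pow_eq_zero_of_le r.le_succ hr), sum_range_succ']
    simp [Nat.cast_smul_eq_nsmul]
  simp only [hexpand]
  have hlim := tendsto_finsetSum (range r) fun k _ =>
    (tendsto_natCast_choose_prime_pow (ℓ := ℓ) k.succ_ne_zero).smul_const ((u - 1) ^ (k + 1))
  simpa using hlim.add_const 1

theorem eq_one_of_mapClusterPt_pow_prime_pow [T2Space A] {u : A} (hu : IsNilpotent (u - 1))
    (h : MapClusterPt u atTop (fun m : ℕ => u ^ ℓ ^ m)) : u = 1 :=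
  t2_iff_nhds.1 inferInstance
    (ClusterPt.mono h (tendsto_pow_prime_pow_of_isNilpotent_sub_one hu)).neBot

theorem MonoidHom.eq_one_of_forall_isNilpotent_sub_one {G : Type*} [Group G]
    [TopologicalSpace G] [IsTopologicalGroup G] [CompactSpace G] [TotallyDisconnectedSpace G]
    (hG : ∀ U : Subgroup G, U.Normal → IsOpen (U : Set G) → Nat.Coprime U.index ℓ) [T2Space A]
    {ρ : G →* Aˣ} (hρ : Continuous ρ) (hu : ∀ g, IsNilpotent ((ρ g : A) - 1)) : ρ = 1 := by
  ext g
  refine eq_one_of_mapClusterPt_pow_prime_pow (ℓ := ℓ) (hu g) ?_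
  simpa [Function.comp_def] using
    (mapClusterPt_pow_pow_of_coprime_index hG g).continuousAt_comp
      (Units.continuous_val.comp hρ).continuousAt

theorem MonoidHom.ker_le_ker_of_forall_isNilpotent_sub_one {G : Type*} [Group G]
    [TopologicalSpace G] [IsTopologicalGroup G] [CompactSpace G] [TotallyDisconnectedSpace G]
    {H : Type*} [Group H] [TopologicalSpace H] [T1Space H] {t : G →* H} (ht : Continuous t)
    (hK : ∀ U : Subgroup t.ker, U.Normal → IsOpen (U : Set t.ker) → Nat.Coprime U.index ℓ)
    [T2Space A] {ρ : G →* Aˣ} (hρ : Continuous ρ) (hu : ∀ g, IsNilpotent ((ρ g : A) - 1)) :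
    t.ker ≤ ρ.ker := by
  have : CompactSpace t.ker :=
    isCompact_iff_compactSpace.1 (isClosed_singleton.preimage ht).isCompact
  have hρ1 := MonoidHom.eq_one_of_forall_isNilpotent_sub_one hK (ρ := ρ.comp t.ker.subtype)
    (hρ.comp continuous_subtype_val) fun g => hu g
  exact fun g hg => congr($hρ1 ⟨g, hg⟩)

theorem val_eq_binomialSum_of_ker_le {G : Type*} [Group G] [TopologicalSpace G]
    [IsTopologicalGroup G] [CompactSpace G] {t : G →* Multiplicative ℤ_[ℓ]} (ht : Continuous t)
    (hts : Function.Surjective t) [T2Space A] {ρ : G →* Aˣ} (hρ : Continuous ρ)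
    (hker : t.ker ≤ ρ.ker) {g₁ : G} (hg₁ : t g₁ = Multiplicative.ofAdd 1) {r : ℕ}
    (hr : ((ρ g₁ : A) - 1) ^ r = 0) (g : G) :
    (ρ g : A)
      = binomialSum r ((ρ g₁ : A) - 1) ((Multiplicative.toAdd (t g) : ℤ_[ℓ]) : ℚ_[ℓ]) := by
  have hdense : Dense (t ⁻¹' Set.range fun n : ℕ => Multiplicative.ofAdd (n : ℤ_[ℓ])) :=
    PadicInt.denseRange_natCast.preimage
      (MonoidHom.isOpenQuotientMap_of_isQuotientMap
        (ht.isClosedMap.isQuotientMap ht hts)).isOpenMap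
  refine congrFun (Continuous.ext_on hdense (Units.continuous_val.comp hρ)
    ((continuous_binomialSum _ _).comp (continuous_subtype_val.comp ht)) ?_) g
  rintro g ⟨n, hn⟩
  have htn : t (g₁ ^ n) = t g := by rw [map_pow, hg₁, ← hn, ← ofAdd_nsmul, nsmul_one]
  have hρn : ρ g = ρ g₁ ^ n := by rw [← map_pow, (ρ.eq_iff.2 (hker (t.eq_iff.1 htn)))]
  change (ρ g : A) = binomialSum r _ ((Multiplicative.toAdd (t g) : ℤ_[ℓ]) : ℚ_[ℓ])
  rw [hρn, ← hn, Units.val_pow_eq_pow_val, toAdd_ofAdd, PadicInt.coe_natCast,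
    binomialSum_natCast hr, add_sub_cancel]

end Padic

theorem expSMul_eq_sum {ℓ : ℕ} [Fact ℓ.Prime] {V : Type*} [NormedAddCommGroup V]
    [NormedSpace ℚ_[ℓ] V] (x : ℚ_[ℓ]) {N : V →L[ℚ_[ℓ]] V} {r : ℕ} (hN : N ^ r = 0) :
    expSMul ℓ x N = ∑ k ∈ range r, (x ^ k / k.factorial) • N ^ k :=
  tsum_eq_sum fun k hk => by rw [pow_eq_zero_of_le (by simpa using hk) hN, smul_zero]

theorem eq_of_forall_expSMul_natCast_eq {ℓ : ℕ} [Fact ℓ.Prime] {V : Type*}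
    [NormedAddCommGroup V] [NormedSpace ℚ_[ℓ] V] {N N' : V →L[ℚ_[ℓ]] V} (hN : IsNilpotent N)
    (hN' : IsNilpotent N')
    (h : ∀ n : ℕ, expSMul ℓ n N = expSMul ℓ n N') : N = N' := by
  obtain ⟨r, hr⟩ := hN
  obtain ⟨s, hs⟩ := hN'
  have hNr : N ^ (r + s) = 0 := pow_eq_zero_of_le (by omega) hr
  have hNs : N' ^ (r + s) = 0 := pow_eq_zero_of_le (by omega) hs
  refine eq_of_forall_sum_exp_eq (K := ℚ_[ℓ])
    (Set.infinite_range_of_injective Nat.cast_injective) hNr hNs ?_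
  rintro _ ⟨n, rfl⟩
  rw [← expSMul_eq_sum _ hNr, ← expSMul_eq_sum _ hNs, h]

theorem stmt_7_general
    (ℓ : ℕ) [Fact ℓ.Prime]
    (G : Type*) [Group G] [TopologicalSpace G] [IsTopologicalGroup G]
    [CompactSpace G] [TotallyDisconnectedSpace G]
    (t : G →* Multiplicative ℤ_[ℓ])
    (ht : Continuous t) (hts : Function.Surjective t)
    (hP : ∀ U : Subgroup t.ker, U.Normal → IsOpen (U : Set t.ker) → Nat.Coprime U.index ℓ)
    (V : Type*) [NormedAddCommGroup V] [NormedSpace ℚ_[ℓ] V]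
    (ρ : G →* (V →L[ℚ_[ℓ]] V)ˣ) (hρc : Continuous ρ)
    (hρu : ∀ g : G, IsNilpotent ((ρ g : V →L[ℚ_[ℓ]] V) - 1)) :
    ∃! N : V →L[ℚ_[ℓ]] V, IsNilpotent N ∧
      ∀ g : G, (ρ g : V →L[ℚ_[ℓ]] V)
        = expSMul ℓ ((Multiplicative.toAdd (t g) : ℤ_[ℓ]) : ℚ_[ℓ]) N := by
  have hker := MonoidHom.ker_le_ker_of_forall_isNilpotent_sub_one ht hP hρc hρu
  obtain ⟨g₁, hg₁⟩ := hts (Multiplicative.ofAdd 1)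
  obtain ⟨r, hr⟩ := hρu g₁
  obtain ⟨N, hN, hbinom⟩ := exists_pow_eq_zero_and_binomialSum_eq (K := ℚ_[ℓ]) hr
  have hρN : ∀ g, (ρ g : V →L[ℚ_[ℓ]] V)
      = expSMul ℓ ((Multiplicative.toAdd (t g) : ℤ_[ℓ]) : ℚ_[ℓ]) N := fun g => by
    rw [val_eq_binomialSum_of_ker_le ht hts hρc hker hg₁ hr g, hbinom, expSMul_eq_sum _ hN]
  refine ⟨N, ⟨⟨r, hN⟩, hρN⟩, fun N' ⟨hN', hρN'⟩ => ?_⟩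
  refine eq_of_forall_expSMul_natCast_eq hN' ⟨r, hN⟩ fun n => ?_
  obtain ⟨g, hg⟩ := hts (Multiplicative.ofAdd n)
  simpa [hg] using (hρN' g).symm.trans (hρN g)

/-- Let `ℓ` be a prime and `G` a profinite group with a continuous
surjective homomorphism `t : G → ℤ_ℓ` whose kernel is pro-(prime-to-`ℓ`). Let `V` be
a finite-dimensional `ℚ_ℓ`-vector space and `ρ : G → GL(V)` a continuous homomorphism
with every `ρ g` unipotent. Then there is a unique nilpotent endomorphism `N` of `V`
with `ρ g = exp (t g • N)` for all `g`. -/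
theorem stmt_7
    (ℓ : ℕ) [Fact ℓ.Prime]
    (G : Type*) [Group G] [TopologicalSpace G] [IsTopologicalGroup G]
    [CompactSpace G] [T2Space G] [TotallyDisconnectedSpace G]
    (t : G →* Multiplicative ℤ_[ℓ])
    (ht : Continuous t) (hts : Function.Surjective t)
    (hP : ∀ U : Subgroup t.ker, U.Normal → IsOpen (U : Set t.ker) → Nat.Coprime U.index ℓ)
    (V : Type*) [NormedAddCommGroup V] [NormedSpace ℚ_[ℓ] V] [FiniteDimensional ℚ_[ℓ] V]
    (ρ : G →* (V →L[ℚ_[ℓ]] V)ˣ) (hρc : Continuous ρ)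
    (hρu : ∀ g : G, IsNilpotent ((ρ g : V →L[ℚ_[ℓ]] V) - 1)) :
    ∃! N : V →L[ℚ_[ℓ]] V, IsNilpotent N ∧
      ∀ g : G, (ρ g : V →L[ℚ_[ℓ]] V)
        = expSMul ℓ ((Multiplicative.toAdd (t g) : ℤ_[ℓ]) : ℚ_[ℓ]) N :=
  stmt_7_general ℓ G t ht hts hP V ρ hρc hρu
end

section
/- Let ℓ be a prime number, G a profinite group with a continuous surjective group homomorphism t : G → ℤ_ℓ whose kernel is a pro-(prime-to-ℓ) profinite group, V a finite-dimensional ℚ_ℓ-vector space, and ρ : G → GL(V) a continuous homomorphism with ρ(g) unipotent for all g ∈ G; let N be the unique nilpotent endomorphism of V with ρ(g) = exp(t(g)·N) for all g ∈ G. Suppose θ : G → G is a continuous group automorphism, c ∈ ℤ_ℓ^× is a unit, and A ∈ GL(V), such that t(θ(g)) = c · t(g) and ρ(θ(g)) = A ∘ ρ(g) ∘ A^{-1} for all g ∈ G. Then A ∘ N ∘ A^{-1} = c · N. -/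
open Polynomial Finset

theorem eq_zero_of_sum_pow_smul_eq_zero {K M : Type*} [Field K] [AddCommGroup M] [Module K M]
    {s : Set K} (hs : s.Infinite) {n : ℕ} {v : ℕ → M}
    (h : ∀ x ∈ s, ∑ k ∈ range n, x ^ k • v k = 0) {k : ℕ} (hk : k < n) : v k = 0 := by
  rw [← Module.forall_dual_apply_eq_zero_iff K]
  intro φ
  set p : K[X] := ∑ j ∈ range n, monomial j (φ (v j))
  have hp : p = 0 := by
    refine eq_zero_of_infinite_isRoot p (hs.mono fun x hx => ?_)
    have hφ := congrArg φ (h x hx)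
    simp only [map_sum, map_smul, smul_eq_mul, map_zero] at hφ
    simpa [p, IsRoot, eval_finsetSum, mul_comm] using hφ
  have hcoeff : p.coeff k = φ (v k) := by
    simp [p, finsetSum_coeff, coeff_monomial, Finset.mem_range.mpr hk]
  rwa [hp, coeff_zero, eq_comm] at hcoeff

section expSMul

variable {ℓ : ℕ} [Fact ℓ.Prime] {V : Type*} [NormedAddCommGroup V] [NormedSpace ℚ_[ℓ] V]

theorem expSMul_mul_eq_sum {N : V →L[ℚ_[ℓ]] V} {n : ℕ} (hN : N ^ n = 0) (a x : ℚ_[ℓ]) :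
    expSMul ℓ (a * x) N = ∑ k ∈ range n, x ^ k • ((a ^ k / (k.factorial : ℚ_[ℓ])) • N ^ k) := by
  rw [expSMul, tsum_eq_sum fun k hk => ?_]
  · refine sum_congr rfl fun k _ => ?_
    rw [smul_smul]
    ring_nf
  · rw [pow_eq_zero_of_le (not_lt.mp (Finset.mem_range.not.mp hk)) hN, smul_zero]

theorem expSMul_conj {N : V →L[ℚ_[ℓ]] V} (hN : IsNilpotent N) (A : (V →L[ℚ_[ℓ]] V)ˣ)
    (x : ℚ_[ℓ]) :
    expSMul ℓ x ((A : V →L[ℚ_[ℓ]] V) * N * ((A⁻¹ : (V →L[ℚ_[ℓ]] V)ˣ) : V →L[ℚ_[ℓ]] V))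
      = A * expSMul ℓ x N * ((A⁻¹ : (V →L[ℚ_[ℓ]] V)ˣ) : V →L[ℚ_[ℓ]] V) := by
  obtain ⟨n, hNn⟩ := hN
  have hMn : ((A : V →L[ℚ_[ℓ]] V) * N * ((A⁻¹ : (V →L[ℚ_[ℓ]] V)ˣ) : V →L[ℚ_[ℓ]] V)) ^ n = 0 := by
    simp [Units.conj_pow, hNn]
  rw [← one_mul x, expSMul_mul_eq_sum hNn, expSMul_mul_eq_sum hMn, mul_sum, sum_mul]
  refine sum_congr rfl fun k _ => ?_
  rw [Units.conj_pow, mul_smul_comm, mul_smul_comm, smul_mul_assoc, smul_mul_assoc]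

end expSMul

theorem stmt_9_general
    (ℓ : ℕ) [Fact ℓ.Prime]
    (G : Type*) [Group G]
    (t : G →* Multiplicative ℤ_[ℓ])
    (hts : Function.Surjective t)
    (V : Type*) [NormedAddCommGroup V] [NormedSpace ℚ_[ℓ] V]
    (ρ : G →* (V →L[ℚ_[ℓ]] V)ˣ)
    (N : V →L[ℚ_[ℓ]] V) (hN : IsNilpotent N)
    (hρN : ∀ g : G, (ρ g : V →L[ℚ_[ℓ]] V)
        = expSMul ℓ ((Multiplicative.toAdd (t g) : ℤ_[ℓ]) : ℚ_[ℓ]) N)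
    (θ : G ≃* G)
    (c : ℤ_[ℓ]ˣ) (A : (V →L[ℚ_[ℓ]] V)ˣ)
    (h₁ : ∀ g : G, Multiplicative.toAdd (t (θ g))
        = (c : ℤ_[ℓ]) * Multiplicative.toAdd (t g))
    (h₂ : ∀ g : G, (ρ (θ g) : V →L[ℚ_[ℓ]] V)
        = (A : V →L[ℚ_[ℓ]] V) * (ρ g : V →L[ℚ_[ℓ]] V) * ((A⁻¹ : (V →L[ℚ_[ℓ]] V)ˣ) : V →L[ℚ_[ℓ]] V)) :
    (A : V →L[ℚ_[ℓ]] V) * N * ((A⁻¹ : (V →L[ℚ_[ℓ]] V)ˣ) : V →L[ℚ_[ℓ]] V)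
      = (((c : ℤ_[ℓ]) : ℚ_[ℓ])) • N := by
  set M := (A : V →L[ℚ_[ℓ]] V) * N * ((A⁻¹ : (V →L[ℚ_[ℓ]] V)ˣ) : V →L[ℚ_[ℓ]] V)
  obtain ⟨n, hn⟩ := id hN
  have hNn : N ^ (n + 2) = 0 := pow_eq_zero_of_le (by omega) hn
  have hMn : M ^ (n + 2) = 0 := by simp only [M, Units.conj_pow, hNn, mul_zero, zero_mul]
  have hexp (x : ℤ_[ℓ]) : expSMul ℓ (((c : ℤ_[ℓ]) : ℚ_[ℓ]) * x) N = expSMul ℓ (1 * x) M := by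
    obtain ⟨g, hg⟩ := hts (Multiplicative.ofAdd x)
    have htg : Multiplicative.toAdd (t g) = x := by rw [hg]; rfl
    rw [one_mul, expSMul_conj hN, ← htg, ← hρN, ← h₂, hρN, h₁, PadicInt.coe_mul]
  have hinf : (Set.range ((↑) : ℤ_[ℓ] → ℚ_[ℓ])).Infinite :=
    Set.infinite_range_of_injective (α := ℤ_[ℓ]) Subtype.coe_injective
  have hcoeff := eq_zero_of_sum_pow_smul_eq_zero hinf (n := n + 2)
    (v := fun k => (((c : ℤ_[ℓ]) : ℚ_[ℓ]) ^ k / (k.factorial : ℚ_[ℓ])) • N ^ k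
      - ((1 : ℚ_[ℓ]) ^ k / (k.factorial : ℚ_[ℓ])) • M ^ k)
    (by
      rintro _ ⟨x, rfl⟩
      have hx := sub_eq_zero.mpr (hexp x)
      rw [expSMul_mul_eq_sum hNn, expSMul_mul_eq_sum hMn,
        ← sum_sub_distrib] at hx
      simpa only [smul_sub] using hx)
    (k := 1) (by omega)
  simpa [sub_eq_zero, eq_comm] using hcoeff

/-- With `G`, `t`, `ρ`, `N` as in the quasi-unipotent setting
(`t : G → ℤ_ℓ` continuous surjective with pro-(prime-to-`ℓ`) kernel,
`ρ : G → GL(V)` continuous with unipotent values, and `N` the nilpotent endomorphism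
with `ρ g = exp (t g • N)`): if `θ : G → G` is a continuous group automorphism,
`c ∈ ℤ_ℓ^×` a unit and `A ∈ GL(V)` with `t (θ g) = c * t g` and
`ρ (θ g) = A ρ(g) A⁻¹` for all `g`, then `A N A⁻¹ = c • N`. -/
theorem stmt_9
    (ℓ : ℕ) [Fact ℓ.Prime]
    (G : Type*) [Group G] [TopologicalSpace G] [IsTopologicalGroup G]
    [CompactSpace G] [T2Space G] [TotallyDisconnectedSpace G]
    (t : G →* Multiplicative ℤ_[ℓ])
    (ht : Continuous t) (hts : Function.Surjective t)
    (hP : ∀ U : Subgroup t.ker, U.Normal → IsOpen (U : Set t.ker) → Nat.Coprime U.index ℓ)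
    (V : Type*) [NormedAddCommGroup V] [NormedSpace ℚ_[ℓ] V] [FiniteDimensional ℚ_[ℓ] V]
    (ρ : G →* (V →L[ℚ_[ℓ]] V)ˣ) (hρc : Continuous ρ)
    (hρu : ∀ g : G, IsNilpotent ((ρ g : V →L[ℚ_[ℓ]] V) - 1))
    (N : V →L[ℚ_[ℓ]] V) (hN : IsNilpotent N)
    (hρN : ∀ g : G, (ρ g : V →L[ℚ_[ℓ]] V)
        = expSMul ℓ ((Multiplicative.toAdd (t g) : ℤ_[ℓ]) : ℚ_[ℓ]) N)
    (θ : G ≃* G) (hθ : Continuous θ)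
    (c : ℤ_[ℓ]ˣ) (A : (V →L[ℚ_[ℓ]] V)ˣ)
    (h₁ : ∀ g : G, Multiplicative.toAdd (t (θ g))
        = (c : ℤ_[ℓ]) * Multiplicative.toAdd (t g))
    (h₂ : ∀ g : G, (ρ (θ g) : V →L[ℚ_[ℓ]] V)
        = (A : V →L[ℚ_[ℓ]] V) * (ρ g : V →L[ℚ_[ℓ]] V) * ((A⁻¹ : (V →L[ℚ_[ℓ]] V)ˣ) : V →L[ℚ_[ℓ]] V)) :
    (A : V →L[ℚ_[ℓ]] V) * N * ((A⁻¹ : (V →L[ℚ_[ℓ]] V)ˣ) : V →L[ℚ_[ℓ]] V)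
      = (((c : ℤ_[ℓ]) : ℚ_[ℓ])) • N :=
  stmt_9_general ℓ G t hts V ρ N hN hρN θ c A h₁ h₂
end

section
/- Let (A_n)_{n∈ℕ} be a sequence of finite abelian groups together with group homomorphisms f_n : A_{n+1} → A_n for each n. Then the group homomorphism Φ : Π_{n∈ℕ} A_n → Π_{n∈ℕ} A_n defined by Φ((a_n)_n) = (a_n − f_n(a_{n+1}))_n is surjective. (Equivalently, the derived inverse limit R^1 lim of any tower of finite abelian groups vanishes.) -/
/-!
Give each finite `A n` the discrete topology, so that `Π n, A n` is compact and
`Φ a = (a n - f n (a (n + 1)))_n` is continuous; its range is then compact, hence closed.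
The range is also dense: the first `N` equations `a k - f k (a (k + 1)) = b k` can always be
solved, by setting `a N = 0` and `a k = b k + f k (a (k + 1))` downwards. So `Φ` is onto.
-/

open Filter Topology

theorem exists_forall_lt_sub_map_succ_eq (N : ℕ) :
    ∀ (A : ℕ → Type*) [∀ n, AddCommGroup (A n)] (f : ∀ n : ℕ, A (n + 1) →+ A n)
      (b : ∀ n, A n), ∃ a : ∀ n, A n, ∀ k < N, a k - f k (a (k + 1)) = b k := by
  induction N with
  | zero => exact fun A _ _ _ => ⟨0, fun k hk => absurd hk k.not_lt_zero⟩
  | succ N ih =>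
    intro A _ f b
    obtain ⟨a', ha'⟩ := ih (fun n => A (n + 1)) (fun n => f (n + 1)) (fun n => b (n + 1))
    let a : ∀ n, A n
      | 0 => b 0 + f 0 (a' 0)
      | k + 1 => a' k
    refine ⟨a, fun k hk => ?_⟩
    cases k with
    | zero => exact add_sub_cancel_right _ _
    | succ k => exact ha' k (Nat.lt_of_succ_lt_succ hk)

theorem Function.Surjective.of_continuous_of_forall_exists_eq_of_lt
    {Y : Type*} {X : ℕ → Type*} [TopologicalSpace Y] [CompactSpace Y]
    [∀ n, TopologicalSpace (X n)] [∀ n, T2Space (X n)] {Φ : Y → ∀ n, X n} (hΦ : Continuous Φ)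
    (h : ∀ (b : ∀ n, X n) (N : ℕ), ∃ a, ∀ k < N, Φ a k = b k) :
    Function.Surjective Φ := by
  intro b
  choose a ha using h b
  have hlim : Tendsto (fun N => Φ (a N)) atTop (𝓝 b) :=
    tendsto_pi_nhds.2 fun k => tendsto_const_nhds.congr' <|
      eventually_atTop.2 ⟨k + 1, fun N hN => (ha N k hN).symm⟩
  have hdense : b ∈ closure (Set.range Φ) :=
    mem_closure_of_tendsto hlim (Eventually.of_forall fun N => Set.mem_range_self _)
  rwa [(isCompact_range hΦ).isClosed.closure_eq] at hdense

/-- For a tower `(A_n, f_n : A_{n+1} → A_n)` of finite abelian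
groups, the map `Φ : Π_n A_n → Π_n A_n`, `Φ(a)_n = a_n - f_n (a_{n+1})`, is
surjective; equivalently, `R^1 lim` of any tower of finite abelian groups vanishes. -/
theorem stmt_12
    (A : ℕ → Type*) [∀ n, AddCommGroup (A n)] [∀ n, Finite (A n)]
    (f : ∀ n : ℕ, A (n + 1) →+ A n) :
    Function.Surjective
      (fun a : (∀ n, A n) => fun n => a n - f n (a (n + 1))) := by
  let _ : ∀ n, TopologicalSpace (A n) := fun _ => ⊥
  have _ : ∀ n, DiscreteTopology (A n) := fun _ => ⟨rfl⟩
  have hΦ : Continuous fun a : (∀ n, A n) => fun n => a n - f n (a (n + 1)) :=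
    continuous_pi fun n => (continuous_apply n).sub
      ((continuous_of_discreteTopology (f := f n)).comp (continuous_apply (n + 1)))
  exact .of_continuous_of_forall_exists_eq_of_lt hΦ fun b N =>
    exists_forall_lt_sub_map_succ_eq N A f b
end
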